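/- arXiv:2209.03930 — 2 statements merged into one kernel-verified Lean document; each statement's English description precedes it below -/
import Mathlib

section
/- Let G be a graph, let C be a cut-set of G, write G − C = H_1 ∪ ⋯ ∪ H_m where each H_i is a connected component of G − C, and for each i let K_i be the subgraph of G induced by V(H_i) ∪ C. Then ∑_{i=1}^m γ_P(K_i) − (m−1)·|C| ≤ γ_P(G). -/
open SimpleGraph

/-- The set of vertices eventually observed in the power domination process started
from `S`: first the closed neighborhood of `S` is observed (domination step), then
repeatedly any vertex that is the unique unobserved neighbor of an observed vertex
becomes observed (propagation step). -/
inductive PDObserved {V : Type*} (G : SimpleGraph V) (S : Set V) : V → Prop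
  | init (v : V) (hv : v ∈ S) : PDObserved G S v
  | dom (u v : V) (hu : u ∈ S) (h : G.Adj u v) : PDObserved G S v
  | force (u v : V) (hu : PDObserved G S u) (h : G.Adj u v)
      (hall : ∀ w, G.Adj u w → w ≠ v → PDObserved G S w) : PDObserved G S v

/-- `S` is a power dominating set of `G` if every vertex is eventually observed. -/
def IsPowerDominatingSet {V : Type*} (G : SimpleGraph V) (S : Set V) : Prop :=
  ∀ v, PDObserved G S v

/-- The power domination number: the minimum cardinality of a power dominating set. -/
noncomputable def powerDominationNumber {V : Type*} (G : SimpleGraph V) : ℕ :=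
  sInf {n | ∃ S : Set V, S.ncard = n ∧ IsPowerDominatingSet G S}

/-- A family `π` indexed by a type with at least two elements is a failed power
dominating partition of `G` if it is a partition of `V(G)` into nonempty parts and
for each part `π i`, the complement `V(G) - π i` is not a power dominating set. -/
def IsFailedPDPartition {V : Type*} (G : SimpleGraph V) {ι : Type*} (π : ι → Set V) : Prop :=
  2 ≤ Nat.card ι ∧ (∀ i, (π i).Nonempty) ∧ Pairwise (Function.onFun Disjoint π) ∧
    (⋃ i, π i) = Set.univ ∧ ∀ i, ¬ IsPowerDominatingSet G ((π i)ᶜ)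

/-- `ℓ_G`: the maximum `k` such that `G` has a failed power dominating partition into
`k` parts, or `1` if no failed power dominating partition exists. -/
noncomputable def ellPD {V : Type*} (G : SimpleGraph V) : ℕ :=
  sSup ({1} ∪ {k | ∃ π : Fin k → Set V, IsFailedPDPartition G π})

/-!
Take a minimum power dominating set `S` of `G` and record, for every `v ∉ S`, the vertex `p v`
that observed it (by domination from `S`, or by forcing at an earlier time). Replaying this
chronology inside `K_i = G[H_i ∪ C]` succeeds from the seed made of `S ∩ V(K_i)` and the vertices
of `K_i` observed from outside `K_i`. Those extra seeds lie in `C \ S`, and a vertex `c ∈ C \ S`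
is observed from outside `K_i` for at most `m - 1` indices `i`: for none if `p c ∈ C`, and for all
but `j` if `p c ∈ H_j`. Counting seeds vertex by vertex gives `∑ γ_P(K_i) ≤ |S| + (m - 1)|C|`.
-/

theorem powerDominationNumber_le_ncard {V : Type*} {G : SimpleGraph V} {S : Set V}
    (hS : IsPowerDominatingSet G S) : powerDominationNumber G ≤ S.ncard :=
  Nat.sInf_le ⟨S, rfl, hS⟩

theorem exists_isPowerDominatingSet_ncard_eq {V : Type*} (G : SimpleGraph V) :
    ∃ S, IsPowerDominatingSet G S ∧ S.ncard = powerDominationNumber G := by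
  obtain ⟨S, hS, hpd⟩ := Nat.sInf_mem (s := {n | ∃ S : Set V, S.ncard = n ∧
    IsPowerDominatingSet G S}) ⟨_, Set.univ, rfl, fun v => .init v trivial⟩
  exact ⟨S, hpd, hS⟩

theorem Set.ncard_eq_sum_ite {α : Type*} [Fintype α] (s : Set α) [DecidablePred (· ∈ s)] :
    s.ncard = ∑ a, if a ∈ s then 1 else 0 := by
  simp [Finset.sum_boole, Set.ncard_eq_toFinset_card']

theorem Set.sum_ncard_eq_sum_ncard_setOf_mem {ι α : Type*} [Fintype ι] [Fintype α]
    (T : ι → Set α) : ∑ i, (T i).ncard = ∑ a, {i | a ∈ T i}.ncard := by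
  classical
  simp only [Set.ncard_eq_sum_ite, Set.mem_ofPred_eq]
  exact Finset.sum_comm

namespace SimpleGraph

section Chronology

variable {V : Type*} (G : SimpleGraph V) (S : Set V)

def pdObservedBy : ℕ → Set V
  | 0 => S ∪ {v | ∃ u ∈ S, G.Adj u v}
  | n + 1 => pdObservedBy n ∪
      {v | ∃ u ∈ pdObservedBy n, G.Adj u v ∧ ∀ w, G.Adj u w → w ≠ v → w ∈ pdObservedBy n}

lemma monotone_pdObservedBy : Monotone (G.pdObservedBy S) :=
  monotone_nat_of_le_succ fun _ => Set.subset_union_left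

lemma PDObserved.exists_mem_pdObservedBy [G.LocallyFinite] {v : V} (h : PDObserved G S v) :
    ∃ n, v ∈ G.pdObservedBy S n := by
  induction h with
  | init v hv => exact ⟨0, .inl hv⟩
  | dom u v hu huv => exact ⟨0, .inr ⟨u, hu, huv⟩⟩
  | force u v _ huv _ ihu ihall =>
    obtain ⟨n₀, hn₀⟩ := ihu
    choose! n hn using ihall
    obtain ⟨N, hN⟩ := ((G.neighborSet u).toFinite.image n).bddAbove
    refine ⟨max n₀ N + 1, .inr ⟨u, G.monotone_pdObservedBy S (le_max_left _ _) hn₀, huv, ?_⟩⟩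
    intro w huw hwv
    exact G.monotone_pdObservedBy S ((hN ⟨w, huw, rfl⟩).trans (le_max_right _ _)) (hn w huw hwv)

/-- `p v` observes `v ∉ S`: either `p v ∈ S` dominates `v`, or `p v` forces `v` at time `t v`. -/
def IsPDChronology (t : V → ℕ) (p : V → V) : Prop :=
  ∀ v ∉ S, G.Adj (p v) v ∧ (p v ∈ S ∨ t (p v) < t v ∧ ∀ w, G.Adj (p v) w → w ≠ v → t w < t v)

variable {G S}

theorem IsPowerDominatingSet.exists_isPDChronology [G.LocallyFinite]
    (hS : IsPowerDominatingSet G S) : ∃ t p, G.IsPDChronology S t p := by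
  classical
  have hobs v : ∃ n, v ∈ G.pdObservedBy S n := (hS v).exists_mem_pdObservedBy
  have hparent v : ∃ u, v ∉ S → G.Adj u v ∧ (u ∈ S ∨ Nat.find (hobs u) < Nat.find (hobs v) ∧
      ∀ w, G.Adj u w → w ≠ v → Nat.find (hobs w) < Nat.find (hobs v)) := by
    by_cases hvS : v ∈ S
    · exact ⟨v, fun h => (h hvS).elim⟩
    have hv := Nat.find_spec (hobs v)
    rcases hk : Nat.find (hobs v) with _ | k
    · rw [hk] at hv
      obtain hv | ⟨u, hu, huv⟩ := hv
      · exact absurd hv hvS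
      · exact ⟨u, fun _ => ⟨huv, .inl hu⟩⟩
    · rw [hk] at hv
      obtain hv | ⟨u, hu, huv, hall⟩ := hv
      · exact absurd (Nat.find_min' (hobs v) hv) (by omega)
      · refine ⟨u, fun _ => ⟨huv, .inr ⟨?_, fun w huw hwv => ?_⟩⟩⟩
        · exact Nat.lt_succ_of_le (Nat.find_min' _ hu)
        · exact Nat.lt_succ_of_le (Nat.find_min' _ (hall w huw hwv))
  choose p hp using hparent
  exact ⟨fun v => Nat.find (hobs v), p, hp⟩

def pdRestrict (S : Set V) (p : V → V) (M : Set V) : Set V :=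
  {v ∈ M | v ∈ S ∨ p v ∉ M}

theorem IsPDChronology.isPowerDominatingSet_induce {t : V → ℕ} {p : V → V}
    (hp : G.IsPDChronology S t p) (M : Set V) :
    IsPowerDominatingSet (G.induce M) (Subtype.val ⁻¹' pdRestrict S p M) := by
  rintro ⟨v, hvM⟩
  induction hv : t v using Nat.strong_induction_on generalizing v with
  | _ n ih =>
  subst hv
  by_cases hvS : v ∈ S
  · exact .init _ ⟨hvM, .inl hvS⟩
  by_cases hpM : p v ∈ M
  · obtain ⟨hadj, hdom | ⟨hlt, hall⟩⟩ := hp v hvS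
    · exact .dom (⟨p v, hpM⟩ : M) _ ⟨hpM, .inl hdom⟩ hadj
    · refine .force (⟨p v, hpM⟩ : M) _ (ih _ hlt _ hpM rfl) hadj fun ⟨w, hwM⟩ hw hwv => ?_
      exact ih _ (hall w hw fun h => hwv (Subtype.ext h)) w hwM rfl
  · exact .init _ ⟨hvM, .inr hpM⟩

theorem IsPDChronology.powerDominationNumber_induce_le {t : V → ℕ} {p : V → V}
    (hp : G.IsPDChronology S t p) (M : Set V) :
    powerDominationNumber (G.induce M) ≤ (pdRestrict S p M).ncard := by
  rw [← Set.ncard_preimage_of_injective_subset_range (Subtype.val_injective (p := (· ∈ M)))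
    (by rw [Subtype.range_val]; exact Set.sep_subset M _)]
  exact powerDominationNumber_le_ncard (hp.isPowerDominatingSet_induce M)

end Chronology

section CutSet

variable {V ι : Type*} {G : SimpleGraph V} {S C : Set V} {Hs : ι → Set V} {t : V → ℕ} {p : V → V}

theorem mem_union_of_adj_of_mem (hcover : (⋃ i, Hs i) = Cᶜ)
    (hsep : ∀ i j, i ≠ j → ∀ u ∈ Hs i, ∀ v ∈ Hs j, ¬ G.Adj u v) {i : ι} {u v : V}
    (hv : v ∈ Hs i) (huv : G.Adj u v) : u ∈ Hs i ∪ C := by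
  by_contra hu
  have huC : u ∈ ⋃ j, Hs j := hcover ▸ fun h => hu (.inr h)
  obtain ⟨j, hj⟩ := Set.mem_iUnion.mp huC
  exact hsep j i (fun hji => hu (.inl (hji ▸ hj))) u hj v hv huv

open Classical in
theorem IsPDChronology.ncard_setOf_mem_pdRestrict_le [Finite ι] (hp : G.IsPDChronology S t p)
    (hdisj : Pairwise (Function.onFun Disjoint Hs)) (hcover : (⋃ i, Hs i) = Cᶜ)
    (hsep : ∀ i j, i ≠ j → ∀ u ∈ Hs i, ∀ v ∈ Hs j, ¬ G.Adj u v) (v : V) :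
    {i | v ∈ pdRestrict S p (Hs i ∪ C)}.ncard ≤
      (if v ∈ S then 1 else 0) + (Nat.card ι - 1) * (if v ∈ C then 1 else 0) := by
  by_cases hvC : v ∈ C <;> by_cases hvS : v ∈ S <;>
    simp only [hvC, hvS, if_true, if_false, mul_one, mul_zero, zero_add, add_zero]
  · have := Set.ncard_le_card {i | v ∈ pdRestrict S p (Hs i ∪ C)}
    omega
  · by_cases hpC : p v ∈ C
    · simp [pdRestrict, hvS, hpC]
    obtain ⟨j, hj⟩ := Set.mem_iUnion.mp (hcover ▸ hpC : p v ∈ ⋃ i, Hs i)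
    calc _ ≤ ({j}ᶜ : Set ι).ncard := Set.ncard_le_ncard fun i hi hij => by
          rw [Set.mem_singleton_iff] at hij
          subst hij
          exact hi.2.elim hvS (· (.inl hj))
      _ = Nat.card ι - 1 := by rw [Set.ncard_compl, Set.ncard_singleton]
  · refine (Set.ncard_le_one).mpr fun i ⟨hvi, _⟩ j ⟨hvj, _⟩ => ?_
    by_contra hij
    exact Set.disjoint_left.mp (hdisj hij) (hvi.resolve_right hvC) (hvj.resolve_right hvC)
  · rw [Set.eq_empty_of_forall_notMem (s := {i | v ∈ pdRestrict S p (Hs i ∪ C)}) fun i hi => ?_,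
      Set.ncard_empty]
    have hadj := mem_union_of_adj_of_mem hcover hsep (hi.1.resolve_right hvC) (hp v hvS).1
    exact hi.2.elim hvS (· hadj)

theorem IsPDChronology.sum_ncard_pdRestrict_le [Fintype V] [Fintype ι]
    (hp : G.IsPDChronology S t p) (hdisj : Pairwise (Function.onFun Disjoint Hs))
    (hcover : (⋃ i, Hs i) = Cᶜ) (hsep : ∀ i j, i ≠ j → ∀ u ∈ Hs i, ∀ v ∈ Hs j, ¬ G.Adj u v) :
    ∑ i, (pdRestrict S p (Hs i ∪ C)).ncard ≤ S.ncard + (Nat.card ι - 1) * C.ncard := by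
  classical
  calc ∑ i, (pdRestrict S p (Hs i ∪ C)).ncard
      = ∑ v, {i | v ∈ pdRestrict S p (Hs i ∪ C)}.ncard := Set.sum_ncard_eq_sum_ncard_setOf_mem _
    _ ≤ ∑ v, ((if v ∈ S then 1 else 0) + (Nat.card ι - 1) * (if v ∈ C then 1 else 0)) :=
      Finset.sum_le_sum fun v _ => hp.ncard_setOf_mem_pdRestrict_le hdisj hcover hsep v
    _ = S.ncard + (Nat.card ι - 1) * C.ncard := by
      rw [Finset.sum_add_distrib, ← Finset.mul_sum, ← Set.ncard_eq_sum_ite,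
        ← Set.ncard_eq_sum_ite]

end CutSet

end SimpleGraph

theorem cutset_lower_bound_general {V : Type*} [Fintype V] (G : SimpleGraph V) (C : Set V)
    (m : ℕ) (Hs : Fin m → Set V)
    (hdisj : Pairwise (Function.onFun Disjoint Hs))
    (hcover : (⋃ i, Hs i) = Cᶜ)
    (hsep : ∀ i j, i ≠ j → ∀ u ∈ Hs i, ∀ v ∈ Hs j, ¬ G.Adj u v) :
    (∑ i, powerDominationNumber (G.induce (Hs i ∪ C))) - (m - 1) * C.ncard ≤
      powerDominationNumber G := by
  classical
  obtain ⟨S, hS, hScard⟩ := exists_isPowerDominatingSet_ncard_eq G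
  obtain ⟨t, p, hp⟩ := hS.exists_isPDChronology
  have hsum := hp.sum_ncard_pdRestrict_le hdisj hcover hsep
  rw [Nat.card_fin, hScard] at hsum
  exact tsub_le_iff_right.mpr
    ((Finset.sum_le_sum fun i _ => hp.powerDominationNumber_induce_le _).trans hsum)

/-- Let `G` be a graph, `C` a cut-set of `G`, and write
`G − C = H_1 ∪ ⋯ ∪ H_m` where each `H_i` is a connected component of `G − C` (given by
the vertex sets `Hs i`: they are nonempty, pairwise disjoint, cover `Cᶜ`, induce
connected subgraphs, and no edge of `G` joins two different parts).  Letting `K_i` be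
the subgraph of `G` induced by `V(H_i) ∪ C`, we have
`∑_{i=1}^m γ_P(K_i) − (m−1)·|C| ≤ γ_P(G)`. -/
theorem cutset_lower_bound {V : Type*} [Fintype V] (G : SimpleGraph V) (C : Set V)
    (m : ℕ) (hm : 2 ≤ m) (Hs : Fin m → Set V)
    (hne : ∀ i, (Hs i).Nonempty)
    (hdisj : Pairwise (Function.onFun Disjoint Hs))
    (hcover : (⋃ i, Hs i) = Cᶜ)
    (hconn : ∀ i, (G.induce (Hs i)).Connected)
    (hsep : ∀ i j, i ≠ j → ∀ u ∈ Hs i, ∀ v ∈ Hs j, ¬ G.Adj u v) :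
    (∑ i, powerDominationNumber (G.induce (Hs i ∪ C))) - (m - 1) * C.ncard ≤
      powerDominationNumber G :=
  cutset_lower_bound_general G C m Hs hdisj hcover hsep
end

section
/- There exist a graph G, a cut-set C of G of size s, components H_1, …, H_m of G − C, and subsets C_i ⊆ C with induced subgraphs L_i on V(H_i) ∪ C_i, such that ∑_{i=1}^m γ_P(L_i) + s < ∑_{i=1}^m γ_P(H_i) + s. Specifically, for i ∈ [2] let H_i be obtained from two disjoint copies of the star K_{1,n} with n ≥ 3 by adding an edge between their centers, let G be obtained from H_1 ∪ H_2 together with two new vertices x_1, x_2 each adjacent to every vertex of H_1 ∪ H_2, let C = {x_1, x_2}, C_i = {x_i}, and let L_i be the subgraph induced by V(H_i) ∪ {x_i}; then γ_P(L_1) + γ_P(L_2) + 2 = 4 while γ_P(H_1) + γ_P(H_2) + 2 = 6. -/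
open SimpleGraph

/-- The graph obtained from two disjoint copies of the star `K_{1,n}` by adding an edge
between their centers.  The centers are `Sum.inl 0` and `Sum.inl 1`, and the leaves of
the star with center `Sum.inl a` are the vertices `Sum.inr (a, j)`. -/
def doubleStar (n : ℕ) : SimpleGraph (Fin 2 ⊕ (Fin 2 × Fin n)) :=
  SimpleGraph.fromRel (fun p q =>
    (p = Sum.inl 0 ∧ q = Sum.inl 1) ∨
    (∃ a j, p = Sum.inl a ∧ q = Sum.inr (a, j)))

/-- The graph `G` obtained from `H_1 ∪ H_2` (where `H_i` is a copy of `doubleStar n`,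
with vertices `Sum.inl (i, w)`) together with two new vertices `x_1 = Sum.inr 0` and
`x_2 = Sum.inr 1`, each adjacent to every vertex of `H_1 ∪ H_2`. -/
def twoDoubleStarsPlusTwo (n : ℕ) :
    SimpleGraph ((Fin 2 × (Fin 2 ⊕ (Fin 2 × Fin n))) ⊕ Fin 2) :=
  SimpleGraph.fromRel (fun p q =>
    (∃ i w w', p = Sum.inl (i, w) ∧ q = Sum.inl (i, w') ∧ (doubleStar n).Adj w w') ∨
    (∃ x v, p = Sum.inr x ∧ q = Sum.inl v))

/-!
The vertex `x_i` is adjacent to every other vertex of `L_i`, so `γ_P(L_i) = 1`. In the double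
star `H_i` the two centres form a power dominating set. Conversely, for `n ≥ 2` the leaves of
either centre form a fort: a vertex outside it with a neighbour in it is the centre, which has
at least two. Observation never enters a fort that the closed neighbourhood of the initial set
misses, and every single vertex misses the fort of the opposite centre, so `γ_P(H_i) = 2`.
-/

section PowerDomination

variable {V W : Type*} {G : SimpleGraph V} {G' : SimpleGraph W} {S : Set V}

def IsFort (G : SimpleGraph V) (F : Set V) : Prop :=
  ∀ u ∉ F, ∀ v ∈ F, G.Adj u v → ∃ w ∈ F, w ≠ v ∧ G.Adj u w

theorem PDObserved.notMem_of_isFort {F : Set V} (hF : IsFort G F)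
    (hS : ∀ u ∈ S, ∀ v ∈ F, u ≠ v ∧ ¬ G.Adj u v) {v : V} (h : PDObserved G S v) :
    v ∉ F := by
  induction h with
  | init v hv => exact fun hvF => (hS v hv v hvF).1 rfl
  | dom u v hu huv => exact fun hvF => (hS u hu v hvF).2 huv
  | force u v _ huv _ ihu ihall =>
    intro hvF
    obtain ⟨w, hwF, hwv, huw⟩ := hF u ihu v hvF huv
    exact ihall w huw hwv hwF

theorem PDObserved.map (e : G ≃g G') {v : V} (h : PDObserved G S v) :
    PDObserved G' (e '' S) (e v) := by
  induction h with
  | init v hv => exact .init _ (Set.mem_image_of_mem e hv)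
  | dom u v hu huv => exact .dom _ _ (Set.mem_image_of_mem e hu) (e.map_adj_iff.2 huv)
  | force u v _ huv _ ihu ihall =>
    refine .force _ _ ihu (e.map_adj_iff.2 huv) fun w huw hwv => ?_
    rw [← e.apply_symm_apply w] at huw hwv ⊢
    exact ihall _ (e.map_adj_iff.1 huw) (fun h => hwv (by rw [h]))

theorem IsPowerDominatingSet.image (e : G ≃g G') (h : IsPowerDominatingSet G S) :
    IsPowerDominatingSet G' (e '' S) :=
  fun v => e.apply_symm_apply v ▸ (h _).map e

theorem IsPowerDominatingSet.nonempty [Nonempty V] (h : IsPowerDominatingSet G S) :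
    S.Nonempty := by
  rw [Set.nonempty_iff_ne_empty]
  rintro rfl
  exact (h (Classical.arbitrary V)).notMem_of_isFort (F := Set.univ)
    (fun u hu => absurd trivial hu) (fun u hu => absurd hu (Set.notMem_empty u)) trivial

theorem isPowerDominatingSet_univ : IsPowerDominatingSet G Set.univ :=
  fun v => .init v trivial

theorem powerDominationNumber_congr (e : G ≃g G') :
    powerDominationNumber G = powerDominationNumber G' := by
  unfold powerDominationNumber
  congr 1
  ext k
  constructor
  · rintro ⟨S, rfl, hS⟩
    exact ⟨e '' S, Set.ncard_image_of_injective S e.injective, hS.image e⟩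
  · rintro ⟨S, rfl, hS⟩
    exact ⟨e.symm '' S, Set.ncard_image_of_injective S e.symm.injective, hS.image e.symm⟩

theorem powerDominationNumber_le (h : IsPowerDominatingSet G S) :
    powerDominationNumber G ≤ S.ncard :=
  Nat.sInf_le ⟨S, rfl, h⟩

theorem le_powerDominationNumber {k : ℕ} (h : ∀ S, IsPowerDominatingSet G S → k ≤ S.ncard) :
    k ≤ powerDominationNumber G :=
  le_csInf ⟨_, Set.univ, rfl, isPowerDominatingSet_univ⟩
    fun _ ⟨S, hSk, hS⟩ => hSk ▸ h S hS

theorem powerDominationNumber_eq_one [Finite V] {v : V} (hv : ∀ w, w ≠ v → G.Adj v w) :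
    powerDominationNumber G = 1 := by
  have : Nonempty V := ⟨v⟩
  have hpd : IsPowerDominatingSet G {v} := fun w => by
    by_cases hw : w = v
    · exact .init w hw
    · exact .dom v w rfl (hv w hw)
  refine le_antisymm ((powerDominationNumber_le hpd).trans_eq (Set.ncard_singleton v)) ?_
  exact le_powerDominationNumber fun S hS => (Set.ncard_pos).2 hS.nonempty

theorem two_le_powerDominationNumber [Finite V] [Nonempty V]
    (h : ∀ v, ¬ IsPowerDominatingSet G {v}) : 2 ≤ powerDominationNumber G := by
  refine le_powerDominationNumber fun S hS => ?_
  by_contra! hlt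
  rcases (Set.ncard_le_one_iff_eq).1 (Nat.le_of_lt_succ hlt) with rfl | ⟨v, rfl⟩
  · exact Set.not_nonempty_empty hS.nonempty
  · exact h v hS

theorem SimpleGraph.Reachable.eq_of_forall_adj {β : Type*} {f : V → β}
    (hf : ∀ u v, G.Adj u v → f u = f v) {u v : V} (h : G.Reachable u v) : f u = f v := by
  rw [reachable_iff_reflTransGen] at h
  induction h with
  | refl => rfl
  | tail _ hab ih => exact ih.trans (hf _ _ hab)

end PowerDomination

namespace doubleStar

variable {n : ℕ}

theorem adj_inl_inl (a b : Fin 2) :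
    (doubleStar n).Adj (Sum.inl a) (Sum.inl b) ↔ a ≠ b := by
  fin_cases a <;> fin_cases b <;> simp [doubleStar]

theorem adj_inl_inr (a b : Fin 2) (j : Fin n) :
    (doubleStar n).Adj (Sum.inl a) (Sum.inr (b, j)) ↔ a = b := by
  fin_cases a <;> fin_cases b <;> simp [doubleStar]

theorem not_adj_inr_inr (a b : Fin 2) (j k : Fin n) :
    ¬ (doubleStar n).Adj (Sum.inr (a, j)) (Sum.inr (b, k)) := by
  simp [doubleStar]

theorem isFort_leaves (hn : 2 ≤ n) (b : Fin 2) :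
    IsFort (doubleStar n) {v | ∃ j, v = Sum.inr (b, j)} := by
  rintro (a | ⟨a, k⟩) - v ⟨j, rfl⟩ huv
  · have : Nontrivial (Fin n) := Fin.nontrivial_iff_two_le.2 hn
    obtain ⟨j', hj'⟩ := exists_ne j
    refine ⟨Sum.inr (b, j'), ⟨j', rfl⟩, by simpa using hj', ?_⟩
    rwa [adj_inl_inr] at huv ⊢
  · exact absurd huv (not_adj_inr_inr a b k j)

theorem not_isPowerDominatingSet_singleton (hn : 2 ≤ n) (v : Fin 2 ⊕ (Fin 2 × Fin n)) :
    ¬ IsPowerDominatingSet (doubleStar n) {v} := by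
  intro h
  obtain ⟨b, hb⟩ : ∃ b : Fin 2,
      ∀ j, v ≠ Sum.inr (b, j) ∧ ¬ (doubleStar n).Adj v (Sum.inr (b, j)) := by
    rcases v with a | ⟨a, k⟩
    · exact ⟨a + 1, fun j => ⟨Sum.inl_ne_inr, by rw [adj_inl_inr]; omega⟩⟩
    · exact ⟨a + 1, fun j => ⟨by simp, not_adj_inr_inr a (a + 1) k j⟩⟩
  exact (h (Sum.inr (b, ⟨0, by omega⟩))).notMem_of_isFort (isFort_leaves hn b)
    (by rintro u rfl w ⟨j, rfl⟩; exact hb j) ⟨_, rfl⟩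

theorem isPowerDominatingSet_centers :
    IsPowerDominatingSet (doubleStar n) (Set.range Sum.inl) := by
  rintro (a | ⟨a, j⟩)
  · exact .init _ ⟨a, rfl⟩
  · exact .dom _ _ ⟨a, rfl⟩ ((adj_inl_inr a a j).2 rfl)

theorem powerDominationNumber_eq_two (hn : 2 ≤ n) : powerDominationNumber (doubleStar n) = 2 := by
  refine le_antisymm ?_ (two_le_powerDominationNumber (not_isPowerDominatingSet_singleton hn))
  calc powerDominationNumber (doubleStar n)
      ≤ (Set.range (Sum.inl : Fin 2 → Fin 2 ⊕ (Fin 2 × Fin n))).ncard :=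
        powerDominationNumber_le isPowerDominatingSet_centers
    _ = 2 := by simp [Set.ncard_range_of_injective Sum.inl_injective]

end doubleStar

namespace twoDoubleStarsPlusTwo

variable {n : ℕ}

theorem adj_inl_inl (i i' : Fin 2) (w w' : Fin 2 ⊕ (Fin 2 × Fin n)) :
    (twoDoubleStarsPlusTwo n).Adj (Sum.inl (i, w)) (Sum.inl (i', w')) ↔
      i = i' ∧ (doubleStar n).Adj w w' := by
  simp only [twoDoubleStarsPlusTwo, fromRel_adj]
  constructor
  · grind [SimpleGraph.Adj.symm]
  · rintro ⟨rfl, h⟩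
    exact ⟨by simp [h.ne], Or.inl (Or.inl ⟨i, w, w', rfl, rfl, h⟩)⟩

theorem adj_inr_inl (x : Fin 2) (v : Fin 2 × (Fin 2 ⊕ (Fin 2 × Fin n))) :
    (twoDoubleStarsPlusTwo n).Adj (Sum.inr x) (Sum.inl v) := by
  simp only [twoDoubleStarsPlusTwo, fromRel_adj]
  exact ⟨by simp, Or.inl (Or.inr ⟨x, v, rfl, rfl⟩)⟩

def copyEmbedding (n : ℕ) (i : Fin 2) : doubleStar n ↪g twoDoubleStarsPlusTwo n where
  toFun w := Sum.inl (i, w)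
  inj' _ _ h := by simpa using h
  map_rel_iff' {w w'} := (adj_inl_inl i i w w').trans (and_iff_right rfl)

theorem powerDominationNumber_induce_copy (hn : 2 ≤ n) (i : Fin 2) :
    powerDominationNumber
      ((twoDoubleStarsPlusTwo n).induce {v | ∃ w, v = Sum.inl (i, w)}) = 2 := by
  have hrange : {v | ∃ w, v = Sum.inl (i, w)} = Set.range (copyEmbedding n i) :=
    Set.ext fun v => exists_congr fun w => eq_comm
  rw [hrange, ← powerDominationNumber_congr (copyEmbedding n i).isoInduceRange]
  exact doubleStar.powerDominationNumber_eq_two hn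

theorem powerDominationNumber_induce_copy_union (i : Fin 2) :
    powerDominationNumber ((twoDoubleStarsPlusTwo n).induce
      ({v | ∃ w, v = Sum.inl (i, w)} ∪ {Sum.inr i})) = 1 := by
  refine powerDominationNumber_eq_one (v := ⟨Sum.inr i, Or.inr rfl⟩) ?_
  rintro ⟨_, ⟨w, rfl⟩ | hx⟩ hne
  · exact adj_inr_inl i (i, w)
  · exact absurd (Subtype.ext (Set.mem_singleton_iff.1 hx)) hne

theorem not_connected_induce_compl :
    ¬ ((twoDoubleStarsPlusTwo n).induce
      (({Sum.inr 0, Sum.inr 1} :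
        Set ((Fin 2 × (Fin 2 ⊕ (Fin 2 × Fin n))) ⊕ Fin 2))ᶜ)).Connected := by
  set C : Set ((Fin 2 × (Fin 2 ⊕ (Fin 2 × Fin n))) ⊕ Fin 2) := {Sum.inr 0, Sum.inr 1}
  intro hconn
  have hcut (j : Fin 2) : Sum.inr j ∈ C := by fin_cases j <;> simp [C]
  have hadj : ∀ x y, ((twoDoubleStarsPlusTwo n).induce Cᶜ).Adj x y →
      Sum.elim Prod.fst id x.val = Sum.elim Prod.fst id y.val := by
    rintro ⟨⟨i, w⟩ | j, hx⟩ ⟨⟨i', w'⟩ | j', hy⟩ h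
    · exact ((adj_inl_inl i i' w w').1 h).1
    · exact absurd (hcut j') hy
    all_goals exact absurd (hcut j) hx
  exact absurd ((hconn.preconnected ⟨Sum.inl (0, Sum.inl 0), by simp [C]⟩
    ⟨Sum.inl (1, Sum.inl 0), by simp [C]⟩).eq_of_forall_adj hadj) (by simp)

end twoDoubleStarsPlusTwo

/-- There exist a graph `G`, a cut-set `C` of `G` of size `s`, components
`H_1, …, H_m` of `G − C`, and subsets `C_i ⊆ C` with induced subgraphs `L_i` on
`V(H_i) ∪ C_i`, such that `∑ γ_P(L_i) + s < ∑ γ_P(H_i) + s`.  Specifically, for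
`i ∈ [2]` let `H_i` be obtained from two disjoint copies of `K_{1,n}` (`n ≥ 3`) by
adding an edge between their centers, let `G` be obtained from `H_1 ∪ H_2` together
with two new vertices `x_1, x_2` each adjacent to every vertex of `H_1 ∪ H_2`, let
`C = {x_1, x_2}` (a cut-set of size 2), `C_i = {x_i}`, and `L_i` the subgraph induced
by `V(H_i) ∪ {x_i}`; then `γ_P(L_1) + γ_P(L_2) + 2 = 4` while
`γ_P(H_1) + γ_P(H_2) + 2 = 6`. -/
theorem cutset_general_bound_strictly_better (n : ℕ) (hn : 3 ≤ n) :
    ¬ ((twoDoubleStarsPlusTwo n).induce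
        (({Sum.inr 0, Sum.inr 1} :
          Set ((Fin 2 × (Fin 2 ⊕ (Fin 2 × Fin n))) ⊕ Fin 2))ᶜ)).Connected ∧
    ({Sum.inr 0, Sum.inr 1} :
        Set ((Fin 2 × (Fin 2 ⊕ (Fin 2 × Fin n))) ⊕ Fin 2)).ncard = 2 ∧
    (∑ i : Fin 2, powerDominationNumber ((twoDoubleStarsPlusTwo n).induce
        ({v | ∃ w, v = Sum.inl (i, w)} ∪ {Sum.inr i}))) + 2 = 4 ∧
    (∑ i : Fin 2, powerDominationNumber ((twoDoubleStarsPlusTwo n).induce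
        {v | ∃ w, v = Sum.inl (i, w)})) + 2 = 6 := by
  refine ⟨twoDoubleStarsPlusTwo.not_connected_induce_compl, Set.ncard_pair (by simp), ?_, ?_⟩
  · simp [twoDoubleStarsPlusTwo.powerDominationNumber_induce_copy_union]
  · simp [twoDoubleStarsPlusTwo.powerDominationNumber_induce_copy (by omega : 2 ≤ n)]
end
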